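/- Let w = w(x_1, …, x_k) be a word, let w' = [w, x_{k+1}], and let G be a finite group. Suppose P_{G,w'}(g) ≥ ε for some g ∈ G and some ε > 0, and let 0 < δ < ε. Let n = ⌊1/δ⌋, let N = G(S_n) be the intersection of the kernels of all homomorphisms from G to the symmetric group S_n, and set M = C_G(N), the centralizer of N in G. Then M is normal in G and P_{G/M, w}(1) > ε − δ. -/

import Mathlib

open scoped Classical

/-- The commutator `[x, y] = x⁻¹y⁻¹xy` (the convention used in the paper). -/
def pcomm {G : Type*} [Group G] (x y : G) : G := x⁻¹ * y⁻¹ * x * y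

/-- The left-normed commutator word `w_k = [x₁, …, x_k] ∈ F_k`,
defined inductively by `w₁ = x₁` and `w_{j+1} = [w_j, x_{j+1}]`. -/
def commWord : (k : ℕ) → FreeGroup (Fin k)
  | 0 => 1
  | 1 => FreeGroup.of 0
  | (k + 2) =>
      pcomm (FreeGroup.map Fin.castSucc (commWord (k + 1))) (FreeGroup.of (Fin.last (k + 1)))

/-- The left-normed commutator `[g₁, …, g_k]` of group elements. -/
def commElt {G : Type*} [Group G] : {k : ℕ} → (Fin k → G) → G
  | 0, _ => 1
  | 1, f => f 0
  | (_ + 2), f => pcomm (commElt (fun i => f i.castSucc)) (f (Fin.last _))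

/-- The word `[x₁², x₂, …, x_k] ∈ F_k`, defined inductively by
`u₁ = x₁²` and `u_{j+1} = [u_j, x_{j+1}]`. -/
def sqCommWord : (k : ℕ) → FreeGroup (Fin k)
  | 0 => 1
  | 1 => FreeGroup.of 0 ^ 2
  | (k + 2) =>
      pcomm (FreeGroup.map Fin.castSucc (sqCommWord (k + 1))) (FreeGroup.of (Fin.last (k + 1)))

/-- `P_{G,w}(g) = |w_G⁻¹(g)| / |G|^k`, the probability that the word map of `w`
takes the value `g` on a uniformly random `k`-tuple. -/
noncomputable def wordProb {k : ℕ} {G : Type*} [Group G] (w : FreeGroup (Fin k)) (g : G) : ℝ :=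
  (Nat.card {f : Fin k → G // FreeGroup.lift f w = g} : ℝ) / (Nat.card G : ℝ) ^ k

/-- A group is residually finite if every nontrivial element is excluded by
some normal subgroup of finite index. -/
def ResiduallyFinite (Γ : Type*) [Group Γ] : Prop :=
  ∀ g : Γ, g ≠ 1 → ∃ Δ : Subgroup Γ, Δ.Normal ∧ Δ.FiniteIndex ∧ g ∉ Δ

/-- A word `w ≠ 1` is a probabilistic identity of `Γ` if for some `ε > 0` every
finite quotient `H` of `Γ` satisfies `P_{H,w}(1) ≥ ε`. -/
def IsProbIdentity {k : ℕ} (Γ : Type*) [Group Γ] (w : FreeGroup (Fin k)) : Prop :=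
  w ≠ 1 ∧ ∃ ε : ℝ, 0 < ε ∧
    ∀ (Δ : Subgroup Γ) [Δ.Normal], Δ.FiniteIndex → ε ≤ wordProb w (1 : Γ ⧸ Δ)

/-- `G(H)`: the intersection of the kernels of all homomorphisms from `G` to `H`. -/
def kerInt (G H : Type*) [Group G] [Group H] : Subgroup G := ⨅ φ : G →* H, φ.ker

/-- A word `1 ≠ w ∈ F_k` is good if for every `ε > 0` there is a word `1 ≠ v ∈ F_m`,
depending only on `w` and `ε`, which is an identity of every finite group `G`
satisfying `P_{G,w}(g) ≥ ε` for some `g ∈ G`. -/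
def IsGood {k : ℕ} (w : FreeGroup (Fin k)) : Prop :=
  w ≠ 1 ∧ ∀ ε : ℝ, 0 < ε → ∃ (m : ℕ) (v : FreeGroup (Fin m)), v ≠ 1 ∧
    ∀ (G : Type) [Group G] [Finite G],
      (∃ g : G, ε ≤ wordProb w g) → ∀ f : Fin m → G, FreeGroup.lift f v = 1

instance kerInt_normal (G H : Type*) [Group G] [Group H] : (kerInt G H).Normal := by
  constructor
  intro x hx g
  rw [kerInt, Subgroup.mem_iInf] at hx ⊢
  intro φ
  exact φ.normal_ker.conj_mem x (hx φ) g

instance centralizer_kerInt_normal (G H : Type*) [Group G] [Group H] :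
    (Subgroup.centralizer ((kerInt G H : Subgroup G) : Set G)).Normal := by
  constructor
  intro x hx g
  rw [Subgroup.mem_centralizer_iff] at hx ⊢
  intro m hm
  have hm' : g⁻¹ * m * g ∈ kerInt G H := by
    simpa using (kerInt_normal G H).conj_mem m hm g⁻¹
  have h1 := hx (g⁻¹ * m * g) hm'
  have h2 : m * (g * x * g⁻¹) = g * ((g⁻¹ * m * g) * x) * g⁻¹ := by group
  rw [h2, h1]; group

/-! Splitting off the last variable, `P_{G,[w,x_{k+1}]}(g)` averages over `f ∈ G^k` the proportion
of `y` with `[w(f), y] = g`; these `y` lie in one coset of `C_G(w(f))`. If `w(f) ∉ M`, some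
element of `G(S_n)` fails to commute with `w(f)`, so `C_G(w(f))` has index `> n`: otherwise the
action on its cosets would give a homomorphism to `S_n` whose kernel lies in `C_G(w(f))`.
Hence the proportion is at most `1/(n+1)` off `M` and at most `1` on it, which gives
`P_{G,w'}(g) ≤ P_{G/M,w}(1) + 1/(n+1)`, and `1/(n+1) < δ` by the choice of `n`. -/

namespace FreeGroup

variable {α β G H : Type*} [Group G] [Group H]

theorem lift_map (f : β → G) (e : α → β) (w : FreeGroup α) :
    lift f (map e w) = lift (f ∘ e) w := by
  induction w using FreeGroup.induction_on <;> simp_all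

theorem lift_comp (φ : G →* H) (f : α → G) (w : FreeGroup α) :
    lift (φ ∘ f) w = φ (lift f w) := by
  induction w using FreeGroup.induction_on <;> simp_all

end FreeGroup

section Commutator

variable {G : Type*} [Group G]

theorem lift_pcomm_snoc {k : ℕ} (F : Fin (k + 1) → G) (w : FreeGroup (Fin k)) :
    FreeGroup.lift F (pcomm (FreeGroup.map Fin.castSucc w) (FreeGroup.of (Fin.last k))) =
      pcomm (FreeGroup.lift (F ∘ Fin.castSucc) w) (F (Fin.last k)) := by
  simp [pcomm, FreeGroup.lift_map]

theorem card_lift_pcomm_snoc_eq_sum [Fintype G] {k : ℕ} (w : FreeGroup (Fin k)) (g : G) :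
    Nat.card {F : Fin (k + 1) → G //
      FreeGroup.lift F (pcomm (FreeGroup.map Fin.castSucc w) (FreeGroup.of (Fin.last k))) = g} =
      ∑ f : Fin k → G, Nat.card {y : G // pcomm (FreeGroup.lift f w) y = g} := by
  rw [← Nat.card_sigma]
  refine Nat.card_congr <|
    ((Fin.snocEquiv fun _ => G).symm.trans (Equiv.prodComm _ _)).subtypeEquiv (fun F => ?_) |>.trans
      (Equiv.subtypeProdEquivSigmaSubtype fun f y => pcomm (FreeGroup.lift f w) y = g)
  rw [lift_pcomm_snoc]
  rfl

theorem card_pcomm_eq_le_card_centralizer [Finite G] (x g : G) :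
    Nat.card {y : G // pcomm x y = g} ≤ Nat.card (Subgroup.centralizer {x}) := by
  rcases isEmpty_or_nonempty {y : G // pcomm x y = g} with hempty | ⟨y₀, hy₀⟩
  · simp
  refine Nat.card_le_card_of_injective (fun y => ⟨y.1 * y₀⁻¹, ?_⟩) fun y y' hyy' => ?_
  · have hconj : y.1⁻¹ * x * y.1 = y₀⁻¹ * x * y₀ := by
      have := y.2.trans hy₀.symm
      simp only [pcomm] at this
      simpa [mul_assoc] using this
    rw [Subgroup.mem_centralizer_singleton_iff]
    calc y.1 * y₀⁻¹ * x = y.1 * (y₀⁻¹ * x * y₀) * y₀⁻¹ := by group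
      _ = x * (y.1 * y₀⁻¹) := by rw [← hconj]; group
  · exact Subtype.ext (mul_right_cancel (congrArg Subtype.val hyy'))

end Commutator

section Centralizer

variable {G : Type*} [Group G]

theorem kerInt_perm_le_of_index_le (H : Subgroup G) [H.FiniteIndex] {n : ℕ} (hn : H.index ≤ n) :
    kerInt G (Equiv.Perm (Fin n)) ≤ H := by
  let ι : G ⧸ H ↪ Fin n :=
    (Finite.equivFin _).toEmbedding.trans (Fin.castLEEmb (H.index_eq_card ▸ hn))
  calc kerInt G (Equiv.Perm (Fin n))
      ≤ ((Equiv.Perm.viaEmbeddingHom ι).comp (MulAction.toPermHom G (G ⧸ H))).ker :=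
        iInf_le (fun φ : G →* Equiv.Perm (Fin n) => φ.ker) _
    _ = H.normalCore := by
        rw [MonoidHom.ker_comp_of_injective _ _ (Equiv.Perm.viaEmbeddingHom_injective ι),
          H.normalCore_eq_ker]
    _ ≤ H := H.normalCore_le

theorem lt_index_centralizer_of_notMem [Finite G] {n : ℕ} {x : G}
    (hx : x ∉ Subgroup.centralizer (kerInt G (Equiv.Perm (Fin n)) : Set G)) :
    n < (Subgroup.centralizer {x}).index := by
  refine lt_of_not_ge fun hn => hx ?_
  rw [Subgroup.mem_centralizer_iff]
  exact fun y hy => Subgroup.mem_centralizer_singleton_iff.mp (kerInt_perm_le_of_index_le _ hn hy)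

theorem card_pcomm_eq_mul_succ_le [Finite G] {n : ℕ} {x : G}
    (hx : x ∉ Subgroup.centralizer (kerInt G (Equiv.Perm (Fin n)) : Set G)) (g : G) :
    Nat.card {y : G // pcomm x y = g} * (n + 1) ≤ Nat.card G :=
  calc Nat.card {y : G // pcomm x y = g} * (n + 1)
      ≤ Nat.card (Subgroup.centralizer {x}) * (Subgroup.centralizer {x}).index :=
        Nat.mul_le_mul (card_pcomm_eq_le_card_centralizer x g) (lt_index_centralizer_of_notMem hx)
    _ = Nat.card G := Subgroup.card_mul_index _

theorem card_pcomm_eq_le [Finite G] {n : ℕ} (x g : G) :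
    (Nat.card {y : G // pcomm x y = g} : ℝ) ≤
      Nat.card G * (if x ∈ Subgroup.centralizer (kerInt G (Equiv.Perm (Fin n)) : Set G) then 1
        else 0) + Nat.card G / (n + 1) := by
  split_ifs with hx
  · have hle : Nat.card {y : G // pcomm x y = g} ≤ Nat.card G := Finite.card_subtype_le _
    have : (0 : ℝ) ≤ Nat.card G / (n + 1) := by positivity
    rw [mul_one]
    linarith [(Nat.cast_le (α := ℝ)).mpr hle]
  · rw [mul_zero, zero_add, le_div_iff₀ (by positivity)]
    exact_mod_cast card_pcomm_eq_mul_succ_le hx g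

end Centralizer

section Quotient

theorem card_comp_surjective_mul_card {A B : Type*} [Group A] [Group B] [Finite A] (φ : A →* B)
    (hφ : Function.Surjective φ) (P : B → Prop) :
    Nat.card {a // P (φ a)} * Nat.card B = Nat.card {b // P b} * Nat.card A := by
  let e := QuotientGroup.quotientKerEquivOfSurjective φ hφ
  have hpre : Nat.card {a // P (φ a)} = Nat.card φ.ker * Nat.card {b // P b} :=
    calc Nat.card {a // P (φ a)} = Nat.card (QuotientGroup.mk ⁻¹' {q : A ⧸ φ.ker | P (e q)}) := rfl
      _ = Nat.card φ.ker * Nat.card {q : A ⧸ φ.ker | P (e q)} := QuotientGroup.card_preimage_mk _ _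
      _ = Nat.card φ.ker * Nat.card {b // P b} := by
        congr 1
        exact Nat.card_congr (e.toEquiv.subtypeEquiv fun _ => Iff.rfl)
  rw [hpre, φ.ker.card_eq_card_quotient_mul_card_subgroup, Nat.card_congr e.toEquiv]
  ring

variable {G H : Type*} [Group G] [Group H] [Finite G]

theorem wordProb_eq_of_surjective {k : ℕ} (φ : G →* H) (hφ : Function.Surjective φ)
    (w : FreeGroup (Fin k)) (h : H) :
    wordProb w h = Nat.card {f : Fin k → G // φ (FreeGroup.lift f w) = h} / Nat.card G ^ k := by
  have hcard : Nat.card {f : Fin k → G // φ (FreeGroup.lift f w) = h} * Nat.card H ^ k =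
      Nat.card {F : Fin k → H // FreeGroup.lift F w = h} * Nat.card G ^ k := by
    have := card_comp_surjective_mul_card (φ.compLeft (Fin k)) hφ.comp_left
      fun F => FreeGroup.lift F w = h
    rw [Nat.card_fun, Nat.card_fun, Nat.card_fin] at this
    simp only [← FreeGroup.lift_comp]
    exact this
  have : Finite H := Finite.of_surjective φ hφ
  have hG : (0 : ℝ) < Nat.card G := Nat.cast_pos.mpr Nat.card_pos
  have hH : (0 : ℝ) < Nat.card H := Nat.cast_pos.mpr Nat.card_pos
  rw [wordProb, div_eq_div_iff (by positivity) (by positivity)]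
  exact_mod_cast hcard.symm

end Quotient

theorem wordProb_pcomm_le {G : Type*} [Group G] [Finite G] {k : ℕ} (w : FreeGroup (Fin k)) (g : G)
    (n : ℕ) :
    wordProb (pcomm (FreeGroup.map Fin.castSucc w) (FreeGroup.of (Fin.last k))) g ≤
      wordProb w (1 : G ⧸ Subgroup.centralizer (kerInt G (Equiv.Perm (Fin n)) : Set G)) +
        1 / (n + 1) := by
  set M := Subgroup.centralizer (kerInt G (Equiv.Perm (Fin n)) : Set G)
  have := Fintype.ofFinite G
  have hG : (0 : ℝ) < Nat.card G := Nat.cast_pos.mpr Nat.card_pos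
  have hsum : ∑ f : Fin k → G, (Nat.card {y : G // pcomm (FreeGroup.lift f w) y = g} : ℝ) ≤
      Nat.card G * Nat.card {f : Fin k → G // FreeGroup.lift f w ∈ M} +
        Nat.card G ^ k * (Nat.card G / (n + 1)) :=
    calc _ ≤ ∑ f : Fin k → G,
          ((Nat.card G : ℝ) * (if FreeGroup.lift f w ∈ M then 1 else 0) + Nat.card G / (n + 1)) :=
          Finset.sum_le_sum fun f _ => card_pcomm_eq_le (FreeGroup.lift f w) g
      _ = _ := by
          rw [Finset.sum_add_distrib, ← Finset.mul_sum, Finset.sum_boole, Finset.sum_const,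
            Finset.card_univ, Fintype.card_fun, Fintype.card_fin, nsmul_eq_mul,
            Nat.card_eq_fintype_card (α := {f : Fin k → G // _}), Fintype.card_subtype,
            ← Nat.card_eq_fintype_card]
          push_cast
          rfl
  rw [wordProb, card_lift_pcomm_snoc_eq_sum,
    wordProb_eq_of_surjective (QuotientGroup.mk' M) (QuotientGroup.mk'_surjective M)]
  simp only [QuotientGroup.mk'_apply, QuotientGroup.eq_one_iff]
  push_cast
  rw [div_le_iff₀ (by positivity)]
  refine hsum.trans (le_of_eq ?_)
  field_simp
  ring

theorem stmt13_general (k : ℕ) (w : FreeGroup (Fin k)) (G : Type*) [Group G] [Finite G]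
    (ε δ : ℝ) (hδ : 0 < δ) (g : G)
    (h : ε ≤ wordProb (pcomm (FreeGroup.map Fin.castSucc w) (FreeGroup.of (Fin.last k))) g)
    (n : ℕ) (hn : n = Nat.floor (1 / δ)) :
    (Subgroup.centralizer ((kerInt G (Equiv.Perm (Fin n)) : Subgroup G) : Set G)).Normal ∧
      ε - δ < wordProb w
        (1 : G ⧸ Subgroup.centralizer ((kerInt G (Equiv.Perm (Fin n)) : Subgroup G) : Set G)) := by
  refine ⟨inferInstance, ?_⟩
  have hfloor : 1 / ((n : ℝ) + 1) < δ := by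
    rw [one_div_lt (by positivity) hδ, hn]
    exact Nat.lt_floor_add_one _
  linarith [wordProb_pcomm_le w g n]

/-- Proposition 2.2: With `w' = [w, x_{k+1}]`, `P_{G,w'}(g) ≥ ε`,
`0 < δ < ε`, `n = ⌊1/δ⌋`, `N = G(S_n)` and `M = C_G(N)`: `M` is normal in `G` and
`P_{G/M, w}(1) > ε - δ`. -/
theorem stmt13 (k : ℕ) (w : FreeGroup (Fin k)) (G : Type*) [Group G] [Finite G]
    (ε δ : ℝ) (hδ : 0 < δ) (hδε : δ < ε) (g : G)
    (h : ε ≤ wordProb (pcomm (FreeGroup.map Fin.castSucc w) (FreeGroup.of (Fin.last k))) g)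
    (n : ℕ) (hn : n = Nat.floor (1 / δ)) :
    (Subgroup.centralizer ((kerInt G (Equiv.Perm (Fin n)) : Subgroup G) : Set G)).Normal ∧
      ε - δ < wordProb w
        (1 : G ⧸ Subgroup.centralizer ((kerInt G (Equiv.Perm (Fin n)) : Subgroup G) : Set G)) :=
  stmt13_general k w G ε δ hδ g h n hn
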